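/- Let R be a 2-torsion free commutative ring with identity and n ≥ 1. Then every generalized Jordan derivation of the upper triangular matrix algebra Tₙ(R) is a generalized derivation. -/

import Mathlib

/-!
A Jordan derivation `D` of a 2-torsion free ring satisfies `D(aba) = D(a)ba + aD(b)a + abD(a)`.
For `n ≥ 2` the matrix unit `p = E₁₁` of `Tₙ(R)` is an idempotent with `(1 - p)Tₙ(R)p = 0`,
and the corners `pTₙ(R)p` and `(1 - p)Tₙ(R)(1 - p)` act faithfully on `pTₙ(R)(1 - p)`.
Subtracting the inner derivation of `D(p)` we may assume `D(p) = 0`; the triple identity then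
gives `D(eaf) = eD(a)f` for `e, f ∈ {p, 1 - p}`. The Leibniz defect `D(ab) - D(a)b - aD(b)`
vanishes on two corners whose product is zero, hence by polarization also on two corners whose
reversed product is zero, and on the two diagonal corners by its cocycle identity and
faithfulness. For `n ≤ 1` the algebra is commutative and polarization alone suffices.
Finally `Ξ - τ` satisfies `(Ξ - τ)(a²) = (Ξ - τ)(a)a`, which linearizes to
`(Ξ - τ)(a) = (Ξ - τ)(1)a`.
-/

open Matrix

/-- The `R`-subalgebra of `n × n` upper triangular matrices. -/
def upperTriangular (n : ℕ) (R : Type*) [CommRing R] :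
    Subalgebra R (Matrix (Fin n) (Fin n) R) where
  carrier := {M | M.BlockTriangular id}
  mul_mem' hM hN := hM.mul hN
  add_mem' hM hN := hM.add hN
  algebraMap_mem' r := by
    intro i j hij
    simp only [Matrix.algebraMap_matrix_apply]
    exact if_neg (fun h => absurd h (ne_of_gt hij))

section Jordan

variable {A : Type*} [Ring A]

def IsJordanDerivation (D : A →+ A) : Prop :=
  ∀ a, D (a * a) = D a * a + a * D a

def leibnizDefect (D : A →+ A) (a b : A) : A :=
  D (a * b) - D a * b - a * D b

variable {D : A →+ A}

theorem leibnizDefect_eq_zero_iff {a b : A} :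
    leibnizDefect D a b = 0 ↔ D (a * b) = D a * b + a * D b := by
  rw [leibnizDefect, sub_sub, sub_eq_zero]

theorem leibnizDefect_add_left (a a' b : A) :
    leibnizDefect D (a + a') b = leibnizDefect D a b + leibnizDefect D a' b := by
  simp only [leibnizDefect, add_mul, map_add]; abel

theorem leibnizDefect_add_right (a b b' : A) :
    leibnizDefect D a (b + b') = leibnizDefect D a b + leibnizDefect D a b' := by
  simp only [leibnizDefect, mul_add, map_add]; abel

theorem leibnizDefect_cocycle (a b c : A) :
    leibnizDefect D a b * c =
      leibnizDefect D a (b * c) - leibnizDefect D (a * b) c + a * leibnizDefect D b c := by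
  simp only [leibnizDefect, mul_assoc]; noncomm_ring

theorem leibnizDefect_add_inner (c a b : A) :
    leibnizDefect (D + (AddMonoidHom.mulLeft c - AddMonoidHom.mulRight c)) a b =
      leibnizDefect D a b := by
  simp only [leibnizDefect, AddMonoidHom.add_apply, AddMonoidHom.sub_apply,
    AddMonoidHom.coe_mulLeft, AddMonoidHom.coe_mulRight]
  noncomm_ring

namespace IsJordanDerivation

theorem leibnizDefect_self (hD : IsJordanDerivation D) (a : A) : leibnizDefect D a a = 0 :=
  leibnizDefect_eq_zero_iff.mpr (hD a)

theorem add_inner (hD : IsJordanDerivation D) (c : A) :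
    IsJordanDerivation (D + (AddMonoidHom.mulLeft c - AddMonoidHom.mulRight c)) := fun a =>
  leibnizDefect_eq_zero_iff.mp ((leibnizDefect_add_inner c a a).trans (hD.leibnizDefect_self a))

theorem map_one (hD : IsJordanDerivation D) : D 1 = 0 := by
  have h := hD 1
  rw [one_mul, mul_one] at h
  simpa using h

theorem leibnizDefect_add_swap (hD : IsJordanDerivation D) (a b : A) :
    leibnizDefect D a b + leibnizDefect D b a = 0 := by
  have h := hD.leibnizDefect_self (a + b)
  rw [leibnizDefect_add_left, leibnizDefect_add_right, leibnizDefect_add_right,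
    hD.leibnizDefect_self, hD.leibnizDefect_self] at h
  simpa [add_assoc] using h

theorem map_mul_mul_self (h2 : ∀ x : A, x + x = 0 → x = 0) (hD : IsJordanDerivation D)
    (a b : A) : D (a * b * a) = D a * b * a + a * D b * a + a * b * D a := by
  have e1 := hD.leibnizDefect_add_swap a (a * b + b * a)
  have e2 := hD.leibnizDefect_add_swap a b
  have e3 := hD.leibnizDefect_add_swap (a * a) b
  have e4 := hD a
  simp only [leibnizDefect, map_add, mul_add, add_mul, ← mul_assoc] at e1 e2 e3
  apply sub_eq_zero.mp
  apply h2
  linear_combination (norm := noncomm_ring) e1 - e3 + a * e2 + e2 * a - e4 * b - b * e4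

theorem map_mul_mul_add_swap (h2 : ∀ x : A, x + x = 0 → x = 0) (hD : IsJordanDerivation D)
    (a b c : A) : D (a * b * c) + D (c * b * a) =
      D a * b * c + a * D b * c + a * b * D c + D c * b * a + c * D b * a + c * b * D a := by
  have e := hD.map_mul_mul_self h2 (a + c) b
  simp only [add_mul, mul_add, map_add, hD.map_mul_mul_self h2] at e
  linear_combination (norm := noncomm_ring) e

theorem leibnizDefect_eq_zero_of_comm (h2 : ∀ x : A, x + x = 0 → x = 0)
    (hcomm : ∀ a b : A, a * b = b * a) (hD : IsJordanDerivation D) (a b : A) :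
    leibnizDefect D a b = 0 := by
  have h := hD.leibnizDefect_add_swap a b
  rw [leibnizDefect, leibnizDefect, hcomm b a, hcomm (D b) a, hcomm b (D a)] at h
  exact h2 _ (by rw [leibnizDefect]; linear_combination (norm := noncomm_ring) h)

end IsJordanDerivation

theorem map_mul_of_generalized_jordan {Ξ d : A →+ A}
    (hd : ∀ a b, d (a * b) = d a * b + a * d b) (hΞ : ∀ a, Ξ (a * a) = Ξ a * a + a * d a)
    (a b : A) : Ξ (a * b) = Ξ a * b + a * d b := by
  have hleft : ∀ c, (Ξ - d) (c * c) = (Ξ - d) c * c := fun c => by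
    simp only [AddMonoidHom.sub_apply, hΞ, hd, sub_mul]; abel
  have hconst : ∀ c, (Ξ - d) c = (Ξ - d) 1 * c := fun c => by
    have e := hleft (c + 1)
    simp only [add_mul, mul_add, mul_one, one_mul, map_add, hleft] at e
    linear_combination (norm := noncomm_ring) e
  have hab := hconst (a * b)
  rw [← mul_assoc, ← hconst a] at hab
  simp only [AddMonoidHom.sub_apply, hd] at hab
  linear_combination (norm := noncomm_ring) hab

end Jordan

section Triangular

variable {A : Type*} [Ring A] {D : A →+ A} {p : A}

theorem leibnizDefect_eq_zero_of_corners
    (H : ∀ e f e' g : A, (e = p ∨ e = 1 - p) → (f = p ∨ f = 1 - p) →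
      (e' = p ∨ e' = 1 - p) → (g = p ∨ g = 1 - p) →
        ∀ a b, leibnizDefect D (e * a * f) (e' * b * g) = 0)
    (x y : A) : leibnizDefect D x y = 0 := by
  have peirce : ∀ z : A,
      z = p * z * p + p * z * (1 - p) + ((1 - p) * z * p + (1 - p) * z * (1 - p)) := fun z => by
    noncomm_ring
  rw [peirce x, peirce y]
  simp only [leibnizDefect_add_left, leibnizDefect_add_right]
  simp [H]

theorem leibnizDefect_corner_eq_zero_of_mul_eq_zero {e f e' g : A}
    (hef : ∀ a, D (e * a * f) = e * D a * f) (he'g : ∀ b, D (e' * b * g) = e' * D b * g)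
    (hfe' : f * e' = 0) (a b : A) : leibnizDefect D (e * a * f) (e' * b * g) = 0 := by
  have h : ∀ x, f * (e' * x) = 0 := fun x => by rw [← mul_assoc, hfe', zero_mul]
  rw [leibnizDefect, hef, he'g]
  simp only [mul_assoc, h, mul_zero, map_zero, sub_zero]

theorem corner_mul_corner {e f g : A} (hf : IsIdempotentElem f) (a b : A) :
    e * a * f * (f * b * g) = e * (a * f * b) * g := by
  simp only [mul_assoc, hf.mul_self_mul]

def PreservesPeirceCorners (D : A →+ A) (p : A) : Prop :=
  ∀ e f, (e = p ∨ e = 1 - p) → (f = p ∨ f = 1 - p) → ∀ a, D (e * a * f) = e * D a * f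

namespace IsJordanDerivation

theorem map_eq_mul_mul_one_sub (hD : IsJordanDerivation D) (hp : IsIdempotentElem p)
    (htri : ∀ a, (1 - p) * a * p = 0) : D p = p * D p * (1 - p) := by
  have e := hD p
  rw [hp.eq] at e
  have hpDp : p * D p * p = 0 := by
    linear_combination (norm := noncomm_ring)
      -(p * e * p) - p * D p * hp.eq - hp.eq * (D p * p)
  linear_combination (norm := noncomm_ring) e + htri (D p) + 2 * hpDp

theorem preservesPeirceCorners (h2 : ∀ x : A, x + x = 0 → x = 0) (hD : IsJordanDerivation D)
    (htri : ∀ a, (1 - p) * a * p = 0) (hDp : D p = 0) : PreservesPeirceCorners D p := by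
  intro e f he hf a
  have hDq : D (1 - p) = 0 := by rw [map_sub, hD.map_one, hDp, sub_zero]
  rcases he with he | he <;> rcases hf with hf | hf <;> rw [he, hf]
  · simpa [hDp] using hD.map_mul_mul_self h2 p a
  · have h := hD.map_mul_mul_add_swap h2 p a (1 - p)
    simpa [hDp, hDq, htri] using h
  · rw [htri, htri, map_zero]
  · simpa [hDq] using hD.map_mul_mul_self h2 (1 - p) a

theorem leibnizDefect_corner_eq_zero_of_mul_eq_zero_swap (hD : IsJordanDerivation D)
    {e f e' g : A} (hef : ∀ a, D (e * a * f) = e * D a * f)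
    (he'g : ∀ b, D (e' * b * g) = e' * D b * g) (hge : g * e = 0) (a b : A) :
    leibnizDefect D (e * a * f) (e' * b * g) = 0 := by
  have h := hD.leibnizDefect_add_swap (e * a * f) (e' * b * g)
  rwa [leibnizDefect_corner_eq_zero_of_mul_eq_zero he'g hef hge, add_zero] at h

theorem leibnizDefect_corner_one_one (hD : IsJordanDerivation D) (hp : IsIdempotentElem p)
    (hc : PreservesPeirceCorners D p)
    (hL : ∀ z, (∀ m, z * (p * m * (1 - p)) = 0) → z * p = 0) (a b : A) :
    leibnizDefect D (p * a * p) (p * b * p) = 0 := by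
  have hpp := hc p p (.inl rfl) (.inl rfl)
  have vanish := hD.leibnizDefect_corner_eq_zero_of_mul_eq_zero_swap hpp
    (hc p (1 - p) (.inl rfl) (.inr rfl)) hp.one_sub_mul_self
  set Z := leibnizDefect D (p * a * p) (p * b * p) with hZ
  have hZp : Z * p = Z := by
    rw [hZ, leibnizDefect, corner_mul_corner hp, hpp, hpp, hpp]
    simp only [sub_mul, mul_assoc, hp.eq]
  have hZm : ∀ m, Z * (p * m * (1 - p)) = 0 := fun m => by
    rw [hZ, leibnizDefect_cocycle, corner_mul_corner hp, corner_mul_corner hp, vanish, vanish,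
      vanish, mul_zero, sub_zero, add_zero]
  rw [← hZp, hL Z hZm]

theorem leibnizDefect_corner_two_two (hD : IsJordanDerivation D) (hp : IsIdempotentElem p)
    (hc : PreservesPeirceCorners D p)
    (hR : ∀ z, (∀ m, p * m * (1 - p) * z = 0) → (1 - p) * z = 0) (a b : A) :
    leibnizDefect D ((1 - p) * a * (1 - p)) ((1 - p) * b * (1 - p)) = 0 := by
  have hqq := hc (1 - p) (1 - p) (.inr rfl) (.inr rfl)
  have vanish := hD.leibnizDefect_corner_eq_zero_of_mul_eq_zero_swap
    (hc p (1 - p) (.inl rfl) (.inr rfl)) hqq hp.one_sub_mul_self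
  set Z := leibnizDefect D ((1 - p) * a * (1 - p)) ((1 - p) * b * (1 - p)) with hZ
  have hqZ : (1 - p) * Z = Z := by
    rw [hZ, leibnizDefect, corner_mul_corner hp.one_sub, hqq, hqq, hqq]
    simp only [mul_sub, ← mul_assoc, hp.one_sub.eq]
  have hmZ : ∀ m, p * m * (1 - p) * Z = 0 := fun m => by
    have h := leibnizDefect_cocycle (D := D) (p * m * (1 - p)) ((1 - p) * a * (1 - p))
      ((1 - p) * b * (1 - p))
    rw [corner_mul_corner hp.one_sub, corner_mul_corner hp.one_sub, vanish, vanish, vanish,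
      zero_mul] at h
    simpa using h.symm
  rw [← hqZ, hR Z hmZ]

theorem leibnizDefect_corner_eq_zero (hD : IsJordanDerivation D) (hp : IsIdempotentElem p)
    (htri : ∀ a, (1 - p) * a * p = 0) (hc : PreservesPeirceCorners D p)
    (hL : ∀ z, (∀ m, z * (p * m * (1 - p)) = 0) → z * p = 0)
    (hR : ∀ z, (∀ m, p * m * (1 - p) * z = 0) → (1 - p) * z = 0) {e f e' g : A}
    (he : e = p ∨ e = 1 - p) (hf : f = p ∨ f = 1 - p) (he' : e' = p ∨ e' = 1 - p)
    (hg : g = p ∨ g = 1 - p) (a b : A) : leibnizDefect D (e * a * f) (e' * b * g) = 0 := by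
  have hef := hc e f he hf
  have he'g := hc e' g he' hg
  rcases he with rfl | rfl <;> rcases hf with rfl | rfl <;> rcases he' with rfl | rfl <;>
    rcases hg with rfl | rfl
  -- a product vanishes, a reversed product vanishes, a diagonal corner, or a corner `(1 - p)Ap`
  all_goals first
    | exact leibnizDefect_corner_eq_zero_of_mul_eq_zero hef he'g (by simp [hp]) a b
    | exact hD.leibnizDefect_corner_eq_zero_of_mul_eq_zero_swap hef he'g (by simp [hp]) a b
    | exact hD.leibnizDefect_corner_one_one hp hc hL a b
    | exact hD.leibnizDefect_corner_two_two hp hc hR a b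
    | simp [leibnizDefect, htri]

theorem leibnizDefect_eq_zero_of_triangular (h2 : ∀ x : A, x + x = 0 → x = 0)
    (hD : IsJordanDerivation D) (hp : IsIdempotentElem p) (htri : ∀ a, (1 - p) * a * p = 0)
    (hL : ∀ z, (∀ m, z * (p * m * (1 - p)) = 0) → z * p = 0)
    (hR : ∀ z, (∀ m, p * m * (1 - p) * z = 0) → (1 - p) * z = 0) (a b : A) :
    leibnizDefect D a b = 0 := by
  set D' := D + (AddMonoidHom.mulLeft (D p) - AddMonoidHom.mulRight (D p))
  have hD' : IsJordanDerivation D' := hD.add_inner (D p)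
  have hD'p : D' p = 0 := by
    have h := hD.map_eq_mul_mul_one_sub hp htri
    simp only [D', AddMonoidHom.add_apply, AddMonoidHom.sub_apply, AddMonoidHom.coe_mulLeft,
      AddMonoidHom.coe_mulRight]
    rw [h]
    simp [mul_assoc, hp.mul_self_mul, hp.one_sub_mul_self]
  have hc := hD'.preservesPeirceCorners h2 htri hD'p
  rw [← leibnizDefect_add_inner (D p)]
  exact leibnizDefect_eq_zero_of_corners
    (fun _ _ _ _ he hf he' hg => hD'.leibnizDefect_corner_eq_zero hp htri hc hL hR he hf he' hg)
    a b

end IsJordanDerivation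

end Triangular

namespace upperTriangular

variable {R : Type*} [CommRing R] {n : ℕ}

theorem single_mem {i j : Fin n} (hij : i ≤ j) (r : R) :
    Matrix.single i j r ∈ upperTriangular n R := by
  intro a b hab
  apply Matrix.single_apply_of_ne
  rintro ⟨rfl, rfl⟩
  exact hab.not_ge hij

theorem mul_comm_of_le_one (hn : n ≤ 1) (a b : upperTriangular n R) : a * b = b * a := by
  have : Subsingleton (Fin n) := Fin.subsingleton_iff_le_one.mpr hn
  ext i j
  simp only [Subalgebra.coe_mul, Matrix.mul_apply]
  refine Finset.sum_congr rfl fun k _ => ?_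
  rw [Subsingleton.elim j i, Subsingleton.elim k i, mul_comm]

theorem eq_zero_of_add_self_eq_zero (h2 : ∀ x : R, x + x = 0 → x = 0) {a : upperTriangular n R}
    (ha : a + a = 0) : a = 0 := by
  ext i j
  exact h2 _ (by simpa using congrFun (congrFun (congrArg Subtype.val ha) i) j)

def single (i j : Fin n) (hij : i ≤ j) (r : R) : upperTriangular n R :=
  ⟨Matrix.single i j r, single_mem hij r⟩

theorem coe_single {i j : Fin n} (hij : i ≤ j) (r : R) :
    (single i j hij r : Matrix (Fin n) (Fin n) R) = Matrix.single i j r := rfl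

section Corner

variable [NeZero n]

theorem single_zero_zero_mul_single_mul_one_sub {i : Fin n} (hi : i ≠ 0) :
    single 0 0 le_rfl 1 * single 0 i (Fin.zero_le i) 1 * (1 - single 0 0 le_rfl 1) =
      (single 0 i (Fin.zero_le i) 1 : upperTriangular n R) := by
  ext : 1
  simp [coe_single, mul_sub, hi]

theorem isIdempotentElem_single_zero_zero :
    IsIdempotentElem (single 0 0 le_rfl 1 : upperTriangular n R) := by
  ext : 1
  simp [coe_single]

theorem one_sub_single_zero_zero_mul_mul_single_zero_zero (a : upperTriangular n R) :
    (1 - single 0 0 le_rfl 1) * a * single 0 0 le_rfl 1 = 0 := by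
  ext i j
  simp only [Subalgebra.coe_mul, Subalgebra.coe_sub, coe_single, sub_mul, one_mul,
    Matrix.single_mul_mul_single]
  rcases eq_or_ne j 0 with rfl | hj
  · rcases eq_or_ne i 0 with rfl | hi
    · simp
    · simp [Ne.symm hi, a.2 (Fin.pos_iff_ne_zero.mpr hi)]
  · simp [Matrix.mul_single_apply_of_ne (hbj := hj), Ne.symm hj]

theorem mul_single_zero_zero_eq_zero (hn : 1 < n) (z : upperTriangular n R)
    (hz : ∀ m, z * (single 0 0 le_rfl 1 * m * (1 - single 0 0 le_rfl 1)) = 0) :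
    z * single 0 0 le_rfl 1 = 0 := by
  have h1 : (⟨1, hn⟩ : Fin n) ≠ 0 := by simp [Fin.ext_iff]
  have h := congrArg Subtype.val (hz (single 0 ⟨1, hn⟩ (Fin.zero_le _) 1))
  rw [single_zero_zero_mul_single_mul_one_sub h1] at h
  ext i j
  have hi := congrFun (congrFun h i) ⟨1, hn⟩
  simp only [Subalgebra.coe_mul, coe_single, Matrix.mul_single_apply_same, mul_one] at hi
  rcases eq_or_ne j 0 with rfl | hj
  · simpa [coe_single] using hi
  · simp [coe_single, Matrix.mul_single_apply_of_ne (hbj := hj)]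

theorem one_sub_single_zero_zero_mul_eq_zero (z : upperTriangular n R)
    (hz : ∀ m, single 0 0 le_rfl 1 * m * (1 - single 0 0 le_rfl 1) * z = 0) :
    (1 - single 0 0 le_rfl 1) * z = 0 := by
  ext i j
  rcases eq_or_ne i 0 with rfl | hi
  · simp [coe_single, sub_mul]
  · have h :=
      congrFun (congrFun (congrArg Subtype.val (hz (single 0 i (Fin.zero_le i) 1))) 0) j
    rw [single_zero_zero_mul_single_mul_one_sub hi] at h
    simpa [coe_single, sub_mul, Matrix.single_mul_apply_of_ne (h := hi)] using h

end Corner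

theorem leibnizDefect_eq_zero (h2 : ∀ x : R, x + x = 0 → x = 0)
    {D : upperTriangular n R →+ upperTriangular n R} (hD : IsJordanDerivation D)
    (a b : upperTriangular n R) : leibnizDefect D a b = 0 := by
  have h2' : ∀ x : upperTriangular n R, x + x = 0 → x = 0 := fun _ =>
    eq_zero_of_add_self_eq_zero h2
  rcases le_or_gt n 1 with hn | hn
  · exact hD.leibnizDefect_eq_zero_of_comm h2' (mul_comm_of_le_one hn) a b
  · have : NeZero n := ⟨by omega⟩
    exact hD.leibnizDefect_eq_zero_of_triangular h2' isIdempotentElem_single_zero_zero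
      one_sub_single_zero_zero_mul_mul_single_zero_zero (mul_single_zero_zero_eq_zero hn)
      one_sub_single_zero_zero_mul_eq_zero a b

end upperTriangular

theorem stmt_8_general {R : Type*} [CommRing R]
    (h2 : ∀ x : R, x + x = 0 → x = 0)
    (n : ℕ)
    (Ξ τ : upperTriangular n R →ₗ[R] upperTriangular n R)
    (hτ : ∀ a, τ (a * a) = τ a * a + a * τ a)
    (hΞ : ∀ a, Ξ (a * a) = Ξ a * a + a * τ a) :
    ∃ d : upperTriangular n R →ₗ[R] upperTriangular n R,
      (∀ a b, d (a * b) = d a * b + a * d b) ∧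
      (∀ a b, Ξ (a * b) = Ξ a * b + a * d b) := by
  have hder : ∀ a b, τ (a * b) = τ a * b + a * τ b := fun a b =>
    leibnizDefect_eq_zero_iff.mp
      (upperTriangular.leibnizDefect_eq_zero h2 (D := τ.toAddMonoidHom) hτ a b)
  exact ⟨τ, hder,
    map_mul_of_generalized_jordan (Ξ := Ξ.toAddMonoidHom) (d := τ.toAddMonoidHom) hder hΞ⟩

/-- Every generalized Jordan derivation of the upper triangular matrix algebra `Tₙ(R)`
over a 2-torsion free commutative ring `R` with identity is a generalized derivation. -/
theorem stmt_8 {R : Type*} [CommRing R]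
    (h2 : ∀ x : R, x + x = 0 → x = 0)
    (n : ℕ) (hn : 1 ≤ n)
    (Ξ τ : upperTriangular n R →ₗ[R] upperTriangular n R)
    (hτ : ∀ a, τ (a * a) = τ a * a + a * τ a)
    (hΞ : ∀ a, Ξ (a * a) = Ξ a * a + a * τ a) :
    ∃ d : upperTriangular n R →ₗ[R] upperTriangular n R,
      (∀ a b, d (a * b) = d a * b + a * d b) ∧
      (∀ a b, Ξ (a * b) = Ξ a * b + a * d b) :=
  stmt_8_general h2 n Ξ τ hτ hΞ
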